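/- arXiv:1904.11759 — 4 statements merged into one kernel-verified Lean document; each statement's English description precedes it below -/
import Mathlib

section
/- With Ψ_j and B_j as in the optical priority queue construction, for every 2 ≤ j ≤ 2ℓ-1 we have L(Ψ_j) - B_j ≥ L(Ψ_{j-1}), where L(Ψ) denotes the minimum element of Ψ. -/
/-- L(Ψ_j), the smallest element of the tag interval Ψ_j. -/
def Lpsi (ℓ j : ℕ) : ℤ :=
  if j ≤ ℓ then (2:ℤ)^(j-1) else 3*(2:ℤ)^(ℓ-1) - (2:ℤ)^(2*ℓ-j)

/-- The buffer size B_j of each multiplexer in the j-th group. -/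
def Bsz (ℓ j : ℕ) : ℕ :=
  if j = 1 then 1
  else if j ≤ ℓ then 2^(j-2)
  else if j ≤ 2*ℓ-2 then 2^(2*ℓ-j-2)
  else 1

/-- For 2 ≤ j ≤ 2ℓ-1, L(Ψ_j) - B_j ≥ L(Ψ_{j-1}). -/
theorem lower_adjacent (ℓ : ℕ) (hℓ : 2 ≤ ℓ) :
    ∀ j, 2 ≤ j → j ≤ 2*ℓ-1 → Lpsi ℓ (j-1) ≤ Lpsi ℓ j - (Bsz ℓ j : ℤ) := by
  intro j hj2 hjle
  unfold Lpsi Bsz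
  rcases le_or_gt j ℓ with h | h
  · have h1 : j - 1 ≤ ℓ := by omega
    have hj1 : j ≠ 1 := by omega
    simp only [if_pos h, if_pos h1, if_neg hj1]
    have e : j - 1 - 1 = j - 2 := by omega
    rw [e]
    have e2 : (2:ℤ)^(j-1) = 2^(j-2) * 2 := by
      rw [← pow_succ]; congr 1; omega
    rw [e2]; push_cast; ring_nf; nlinarith [pow_pos (by norm_num : (0:ℤ) < 2) (j-2)]
  · have hj1 : j ≠ 1 := by omega
    simp only [if_neg (by omega : ¬ j ≤ ℓ), if_neg hj1]
    rcases le_or_gt j (2*ℓ-2) with h2 | h2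
    · simp only [if_pos h2]
      obtain ⟨k, hk⟩ : ∃ k, 2*ℓ - j = k + 2 := ⟨2*ℓ - j - 2, by omega⟩
      rw [hk]
      simp only [Nat.add_sub_cancel]
      rcases le_or_gt (j-1) ℓ with h3 | h3
      · -- j = ℓ + 1
        have hj : j = ℓ + 1 := by omega
        simp only [if_pos h3]
        have e4 : j - 1 - 1 = ℓ - 1 := by omega
        have e5 : ℓ - 1 = k + 2 := by omega
        rw [e4, e5]
        push_cast
        ring_nf
        nlinarith [pow_pos (by norm_num : (0:ℤ) < 2) k]
      · simp only [if_neg (by omega : ¬ j - 1 ≤ ℓ)]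
        have e4 : 2*ℓ - (j-1) = k + 3 := by omega
        rw [e4]
        have : (0:ℤ) < 2^k := pow_pos (by norm_num) k
        push_cast
        ring_nf
        nlinarith
    · have hj : j = 2*ℓ - 1 := by omega
      simp only [if_neg (by omega : ¬ j ≤ 2*ℓ-2)]
      rcases le_or_gt (j-1) ℓ with h3 | h3
      · -- ℓ = 2, j = 3
        have : ℓ = 2 := by omega
        subst this
        have : j = 3 := by omega
        subst this
        norm_num
      · simp only [if_neg (by omega : ¬ j - 1 ≤ ℓ)]
        have e4 : 2*ℓ - (j-1) = 2 := by omega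
        have e5 : 2*ℓ - j = 1 := by omega
        rw [e4, e5]
        push_cast
        linarith
end

section
/- With Ψ_j and B_j as in the optical priority queue construction, for every 1 ≤ j ≤ 2ℓ-2 we have U(Ψ_j) + B_j ≤ U(Ψ_{j+1}), where U(Ψ) denotes the maximum element of Ψ. -/
/-- U(Ψ_j), the largest element of the tag interval Ψ_j. -/
def Upsi (ℓ j : ℕ) : ℤ :=
  if j ≤ ℓ then (2:ℤ)^j - 1 else 3*(2:ℤ)^(ℓ-1) - (2:ℤ)^(2*ℓ-j-1) - 1

/-- For 1 ≤ j ≤ 2ℓ-2, U(Ψ_j) + B_j ≤ U(Ψ_{j+1}). -/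
theorem upper_adjacent (ℓ : ℕ) (hℓ : 2 ≤ ℓ) :
    ∀ j, 1 ≤ j → j ≤ 2*ℓ-2 → Upsi ℓ j + (Bsz ℓ j : ℤ) ≤ Upsi ℓ (j+1) := by
  intro j hj1 hj2
  unfold Upsi Bsz
  rcases eq_or_lt_of_le hj1 with h1 | h1
  · -- j = 1
    rw [← h1]
    rw [if_pos (by omega : (1:ℕ) ≤ ℓ), if_pos rfl, if_pos (by omega : (2:ℕ) ≤ ℓ)]
    norm_num
  · rcases lt_trichotomy j ℓ with h2 | h2 | h2
    · -- 2 ≤ j < ℓ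
      obtain ⟨k, rfl⟩ : ∃ k, j = k + 2 := ⟨j - 2, by omega⟩
      rw [if_pos (by omega : k + 2 ≤ ℓ), if_neg (by omega), if_pos (by omega : k + 2 ≤ ℓ),
        if_pos (by omega : k + 2 + 1 ≤ ℓ)]
      push_cast
      have h4 : (2:ℤ)^(k+2) = 4 * 2^k := by ring
      have h8 : (2:ℤ)^(k+2+1) = 8 * 2^k := by ring
      have hp : (0:ℤ) ≤ 2^k := by positivity
      rw [h4, h8]; linarith
    · -- j = ℓ
      subst h2
      obtain ⟨m, rfl⟩ : ∃ m, j = m + 2 := ⟨j - 2, by omega⟩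
      rw [if_pos le_rfl, if_neg (by omega), if_pos le_rfl, if_neg (by omega)]
      push_cast
      have e1 : m + 2 - 2 = m := by omega
      have e2 : m + 2 - 1 = m + 1 := by omega
      have e3 : 2 * (m + 2) - (m + 2 + 1) - 1 = m := by omega
      rw [e3]
      have h4 : (2:ℤ)^(m+2) = 4 * 2^m := by ring
      have h2' : (2:ℤ)^(m+1) = 2 * 2^m := by ring
      rw [h4, h2']; ring_nf; linarith
    · -- ℓ < j ≤ 2ℓ - 2
      obtain ⟨m, hm⟩ : ∃ m, 2 * ℓ - j - 2 = m ∧ 2 * ℓ - j - 1 = m + 1 ∧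
          2 * ℓ - (j + 1) - 1 = m := ⟨2 * ℓ - j - 2, by omega⟩
      obtain ⟨e1, e2, e3⟩ := hm
      rw [if_neg (by omega), if_neg (by omega), if_neg (by omega), if_pos hj2,
        if_neg (by omega), e1, e2, e3]
      push_cast
      have h2' : (2:ℤ)^(m+1) = 2 * 2^m := by ring
      linarith [h2']
end

section
/- Let q₀, q₁, q₂ : ℕ → ℕ be the queue lengths of three multiplexers in a group, evolving by qᵢ(t) = max(qᵢ(t-1) + mᵢ(t) - 1, 0) where mᵢ(t) ∈ ℕ are arrivals distributed round-robin (so that at every time t, letting k(t) be the index of the last-used multiplexer mod 3, m_{k(t)}(t) ≥ m_{(k(t)-1) mod 3}(t) ≥ m_{(k(t)-2) mod 3}(t) and m_{k(t)}(t) - m_{(k(t)-2) mod 3}(t) ≤ 1, with k(t) determined by the cumulative arrival count mod 3). Starting from q₀(0) = q₁(0) = q₂(0) = 0, for all t: q_{k(t)}(t) ≥ q_{(k(t)-1) mod 3}(t) ≥ q_{(k(t)-2) mod 3}(t) and q_{k(t)}(t) - q_{(k(t)-2) mod 3}(t) ≤ 1. -/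
/-!
The same invariant, `v (κ - 2) ≤ v (κ - 1) ≤ v κ ≤ v (κ - 2) + 1`, holds for every arrival vector
and is propagated to the queues step by step. An arrival vector balanced at `κ'` is its minimum
plus one extra packet on each of the `r` most recently used inputs, where `r` is its total mod 3;
so the queues were balanced at `κ' - r`, the extra packets fall exactly on the lagging queues,
and the sum is balanced at `κ'`. Serving one packet per nonempty queue is monotone and cannot
increase the spread.
-/

open Fin.NatCast

def CyclicBalanced (v : Fin 3 → ℕ) (κ : Fin 3) : Prop :=
  (v (κ - 2) ≤ v (κ - 1) ∧ v (κ - 1) ≤ v κ) ∧ v κ ≤ v (κ - 2) + 1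

theorem Fin.sum_univ_three_sub {M : Type*} [AddCommMonoid M] (f : Fin 3 → M) (κ : Fin 3) :
    ∑ i, f i = f κ + f (κ - 1) + f (κ - 2) := by
  rw [← (Equiv.subLeft κ).sum_comp, Fin.sum_univ_three]
  simp

namespace CyclicBalanced

variable {v w : Fin 3 → ℕ} {κ κ' : Fin 3}

theorem tsub_one (hv : CyclicBalanced v κ) : CyclicBalanced (fun i => v i - 1) κ := by
  unfold CyclicBalanced at *
  dsimp only
  omega

theorem add (hv : CyclicBalanced v κ) (hw : CyclicBalanced w κ')
    (hκ' : κ' = κ + ((∑ i, w i : ℕ) : Fin 3)) : CyclicBalanced (v + w) κ' := by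
  have hκ : ∀ r : ℕ, ∑ i, w i = 3 * w (κ' - 2) + r → κ = κ' - r := by
    intro r hr
    rw [hκ', hr, Nat.cast_add, Fin.natCast_eq_zero.mpr (dvd_mul_right 3 _), zero_add,
      add_sub_cancel_right]
  rw [Fin.sum_univ_three_sub w κ'] at hκ
  unfold CyclicBalanced at hv hw ⊢
  simp only [Pi.add_apply]
  obtain h | h | h : (w κ' = w (κ' - 2) ∧ w (κ' - 1) = w (κ' - 2)) ∨
      (w κ' = w (κ' - 2) + 1 ∧ w (κ' - 1) = w (κ' - 2)) ∨
      (w κ' = w (κ' - 2) + 1 ∧ w (κ' - 1) = w (κ' - 2) + 1) := by omega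
  · obtain rfl : κ = κ' - 0 := hκ 0 (by omega)
    simp only [sub_zero] at hv
    omega
  · obtain rfl : κ = κ' - 1 := hκ 1 (by omega)
    simp only [sub_sub, show (1 + 1 : Fin 3) = 2 from rfl, show (1 + 2 : Fin 3) = 0 from rfl,
      sub_zero] at hv
    omega
  · obtain rfl : κ = κ' - 2 := hκ 2 (by omega)
    simp only [sub_sub, show (2 + 1 : Fin 3) = 0 from rfl, show (2 + 2 : Fin 3) = 1 from rfl,
      sub_zero] at hv
    omega

end CyclicBalanced

open Fin.NatCast in
/-- Lemma 6: under round-robin assignment of arrivals to three non-idling multiplexers,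
the queue lengths stay balanced (differ by at most one) and are ordered cyclically
according to the last input used. Here `m i t` is the number of arrivals to multiplexer
`i` at time `t ≥ 1`, `k t` the cumulative arrival count mod 3, and the queues evolve by
`q i t = max (q i (t-1) + m i t - 1) 0` (natural subtraction). -/
theorem round_robin_balance (m : Fin 3 → ℕ → ℕ) (q : Fin 3 → ℕ → ℕ) (k : ℕ → Fin 3)
    (hk : ∀ t, k t = ((∑ s ∈ Finset.Icc 1 t, ∑ i, m i s : ℕ) : Fin 3))
    (hq0 : ∀ i, q i 0 = 0)
    (hq : ∀ i t, 1 ≤ t → q i t = q i (t-1) + m i t - 1)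
    (hm_ord : ∀ t, 1 ≤ t →
      m (k t - 2) t ≤ m (k t - 1) t ∧ m (k t - 1) t ≤ m (k t) t)
    (hm_bal : ∀ t, 1 ≤ t → m (k t) t ≤ m (k t - 2) t + 1) :
    ∀ t, (q (k t - 2) t ≤ q (k t - 1) t ∧ q (k t - 1) t ≤ q (k t) t) ∧
      q (k t) t ≤ q (k t - 2) t + 1 := by
  suffices ∀ t, CyclicBalanced (q · t) (k t) from this
  intro t
  induction t with
  | zero => simp [CyclicBalanced, hq0]
  | succ t ih =>
    have hk_succ : k (t + 1) = k t + ((∑ i, m i (t + 1) : ℕ) : Fin 3) := by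
      rw [hk, hk, Finset.sum_Icc_succ_top (by omega), Nat.cast_add]
    have hq_succ : (q · (t + 1)) = fun i => ((q · t) + (m · (t + 1))) i - 1 :=
      funext fun i => hq i (t + 1) (by omega)
    have hm : CyclicBalanced (m · (t + 1)) (k (t + 1)) :=
      ⟨hm_ord (t + 1) (by omega), hm_bal (t + 1) (by omega)⟩
    rw [hq_succ]
    exact (ih.add hm hk_succ).tsub_one
end

section
/- Let τ₁, τ₂ : ℕ → ℤ be the tags of two packets simultaneously present in a priority queue at times t-1 and t, where tags are the ranks of distinct priorities among all present packets, the queue loses/admits/departs at most one packet per slot, and departures take the rank-1 packet while losses take the maximal-rank packet. Then |(τ₁(t) - τ₂(t)) - (τ₁(t-1) - τ₂(t-1))| ≤ 1. -/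
private def rk {α : Type*} [LinearOrder α] (S : Finset α) (p : α) : ℤ :=
  ((S.filter (· ≤ p)).card : ℤ)

private lemma rk_insert {α : Type*} [LinearOrder α] {S : Finset α} {x : α}
    (hx : x ∉ S) (p : α) :
    rk (insert x S) p = rk S p + if x ≤ p then 1 else 0 := by
  unfold rk
  rw [Finset.filter_insert]
  split
  · rw [Finset.card_insert_of_notMem (fun h => hx (Finset.mem_filter.1 h).1)]
    push_cast; ring
  · simp

private lemma rk_erase {α : Type*} [LinearOrder α] {S : Finset α} {a : α}
    (ha : a ∈ S) (p : α) :
    rk (S.erase a) p = rk S p - if a ≤ p then 1 else 0 := by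
  unfold rk
  rw [Finset.filter_erase]
  split
  · rw [Finset.card_erase_of_mem (Finset.mem_filter.2 ⟨ha, by assumption⟩)]
    have : 0 < (S.filter (· ≤ p)).card :=
      Finset.card_pos.2 ⟨a, Finset.mem_filter.2 ⟨ha, by assumption⟩⟩
    push_cast [Nat.cast_sub (by omega : 1 ≤ (S.filter (· ≤ p)).card)]
    ring
  · rw [Finset.erase_eq_of_notMem (fun h => by
      exact absurd (Finset.mem_filter.1 h).2 (by assumption))]
    simp

/-- Lemma 4 (difference of tags): under priority-queue dynamics, where the set of
buffered priorities evolves by optionally inserting one new element and then optionally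
removing the least element (departure) or the greatest element (loss), the difference of
the tags (ranks) of any two packets present at both times t-1 and t changes by at most
one per time slot. -/
theorem tag_difference_changes_by_at_most_one {α : Type*} [LinearOrder α]
    (S : ℕ → Finset α) (t : ℕ) (ht : 1 ≤ t)
    (hstep : ∃ S' : Finset α,
      (S' = S (t-1) ∨ ∃ x, x ∉ S (t-1) ∧ S' = insert x (S (t-1))) ∧
      (S t = S' ∨
        (∃ hne : S'.Nonempty, S t = S'.erase (S'.min' hne)) ∨
        (∃ hne : S'.Nonempty, S t = S'.erase (S'.max' hne))))
    (p₁ p₂ : α)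
    (hp₁ : p₁ ∈ S (t-1)) (hp₁' : p₁ ∈ S t)
    (hp₂ : p₂ ∈ S (t-1)) (hp₂' : p₂ ∈ S t) :
    |((((S t).filter (· ≤ p₁)).card : ℤ) - (((S t).filter (· ≤ p₂)).card : ℤ))
      - ((((S (t-1)).filter (· ≤ p₁)).card : ℤ)
          - (((S (t-1)).filter (· ≤ p₂)).card : ℤ))| ≤ 1 := by
  obtain ⟨S', hins, hrem⟩ := hstep
  show |(rk (S t) p₁ - rk (S t) p₂) - (rk (S (t-1)) p₁ - rk (S (t-1)) p₂)| ≤ 1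
  -- Step 1: the insertion changes the difference by at most 1
  have h1 : |(rk S' p₁ - rk S' p₂) - (rk (S (t-1)) p₁ - rk (S (t-1)) p₂)| ≤ 1 := by
    rcases hins with rfl | ⟨x, hx, rfl⟩
    · simp
    · rw [rk_insert hx p₁, rk_insert hx p₂]
      split <;> split <;> simp
  -- Step 2: the removal leaves the difference unchanged
  have h2 : rk (S t) p₁ - rk (S t) p₂ = rk S' p₁ - rk S' p₂ := by
    rcases hrem with heq | ⟨hne, heq⟩ | ⟨hne, heq⟩
    · rw [heq]
    · -- erase min: both ranks drop by 1
      have h₁' : p₁ ∈ S' := Finset.mem_of_mem_erase (heq ▸ hp₁')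
      have h₂' : p₂ ∈ S' := Finset.mem_of_mem_erase (heq ▸ hp₂')
      rw [heq, rk_erase (S'.min'_mem hne) p₁, rk_erase (S'.min'_mem hne) p₂,
        if_pos (S'.min'_le _ h₁'), if_pos (S'.min'_le _ h₂')]
      ring
    · -- erase max: neither rank changes
      have hm := S'.max'_mem hne
      have hne₁ : p₁ ≠ S'.max' hne := Finset.ne_of_mem_erase (heq ▸ hp₁')
      have hne₂ : p₂ ≠ S'.max' hne := Finset.ne_of_mem_erase (heq ▸ hp₂')
      have h₁' : p₁ ∈ S' := Finset.mem_of_mem_erase (heq ▸ hp₁')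
      have h₂' : p₂ ∈ S' := Finset.mem_of_mem_erase (heq ▸ hp₂')
      rw [heq, rk_erase hm p₁, rk_erase hm p₂,
        if_neg (fun h => hne₁ (le_antisymm (S'.le_max' _ h₁') h)),
        if_neg (fun h => hne₂ (le_antisymm (S'.le_max' _ h₂') h))]
      ring
  rw [h2]
  exact h1
end
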